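/- arXiv:2510.01291 — 5 statements merged into one kernel-verified Lean document; each statement's English description precedes it below -/
import Mathlib

section
/- Suppose A is (1,δ)-differentially private, the datasets sizes satisfy |T| ≥ εn and |W| ≤ n−εn (so |W|/|T| ≤ (1−ε)/ε), and V, W are held fixed (public). Then the algorithm Aux(U,V,W) is (2+2·ln 2, 4e·δ)-differentially private with respect to U: for any neighboring U₁,U₂ and any measurable output set O, Pr[Aux(U₁,V,W)∈O] ≤ e^{2+2 ln 2}·Pr[Aux(U₂,V,W)∈O] + 4e·δ. -/
open MeasureTheory
open scoped ENNReal

/-- Two datasets (tuples) are neighboring if they differ in exactly one entry. -/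
def Neighboring {Z : Type*} {n : ℕ} (S₁ S₂ : Fin n → Z) : Prop :=
  ∃ i, S₁ i ≠ S₂ i ∧ ∀ j, j ≠ i → S₁ j = S₂ j

/-- `(ε,δ)`-differential privacy of a randomized algorithm (a kernel into `PMF`s). -/
def IsDP {Z Ω : Type*} {n : ℕ} (A : (Fin n → Z) → PMF Ω) (ε δ : ℝ) : Prop :=
  ∀ S₁ S₂ : Fin n → Z, Neighboring S₁ S₂ → ∀ O : Set Ω,
    (A S₁).toOuterMeasure O ≤ ENNReal.ofReal (Real.exp ε) * (A S₂).toOuterMeasure O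
      + ENNReal.ofReal δ

/-- Generalization error of a hypothesis w.r.t. a distribution over `X × Bool`. -/
noncomputable def errD {X : Type*} [MeasurableSpace X] (D : Measure (X × Bool))
    (h : X → Bool) : ℝ :=
  (D {p | h p.1 ≠ p.2}).toReal

/-- Empirical error of a hypothesis on a labeled dataset. -/
noncomputable def errS {X : Type*} {n : ℕ} (S : Fin n → X × Bool) (h : X → Bool) : ℝ :=
  (Finset.univ.filter fun i => h (S i).1 ≠ (S i).2).card / n

/-- Empirical disagreement between two hypotheses on an unlabeled dataset. -/
noncomputable def disS {X : Type*} {n : ℕ} (Sx : Fin n → X) (h₁ h₂ : X → Bool) : ℝ :=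
  (Finset.univ.filter fun i => h₁ (Sx i) ≠ h₂ (Sx i)).card / n

/-- Generalization disagreement between two hypotheses w.r.t. a marginal distribution. -/
noncomputable def disD {X : Type*} [MeasurableSpace X] (DX : Measure X)
    (h₁ h₂ : X → Bool) : ℝ :=
  (DX {x | h₁ x ≠ h₂ x}).toReal

/-- The VC dimension of a concept class: the largest `d` such that some `d` distinct
points are shattered by `C`. -/
noncomputable def vcDim {X : Type*} (C : Set (X → Bool)) : ℕ :=
  sSup {d : ℕ | ∃ f : Fin d → X, Function.Injective f ∧
    ∀ g : Fin d → Bool, ∃ c ∈ C, ∀ i, c (f i) = g i}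

/-- The optimal (infimum) generalization error over the concept class. -/
noncomputable def optErr {X : Type*} [MeasurableSpace X] (C : Set (X → Bool))
    (D : Measure (X × Bool)) : ℝ :=
  ⨅ c : C, errD D (c : X → Bool)

/-- `(α,β)`-PAC learner (realizable setting) with sample complexity `m`. -/
def IsPACLearner {X : Type*} [MeasurableSpace X] (C : Set (X → Bool)) (α β : ℝ) {m : ℕ}
    (A : (Fin m → X × Bool) → PMF (X → Bool)) : Prop :=
  ∀ D : Measure (X × Bool), IsProbabilityMeasure D → (∃ c ∈ C, errD D c = 0) →
    ENNReal.ofReal (1 - β) ≤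
      ∫⁻ S, (A S).toOuterMeasure {h | errD D h ≤ α} ∂(Measure.pi fun _ : Fin m => D)

/-- `(α,β)`-agnostic learner with sample complexity `n`. -/
def IsAgnosticLearner {X : Type*} [MeasurableSpace X] (C : Set (X → Bool)) (α β : ℝ) {n : ℕ}
    (A : (Fin n → X × Bool) → PMF (X → Bool)) : Prop :=
  ∀ D : Measure (X × Bool), IsProbabilityMeasure D →
    ENNReal.ofReal (1 - β) ≤
      ∫⁻ S, (A S).toOuterMeasure {h | errD D h ≤ optErr C D + α}
        ∂(Measure.pi fun _ : Fin n => D)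

/-- A learner is proper if it always outputs a hypothesis in `C`. -/
def IsProper {X : Type*} {n : ℕ} (C : Set (X → Bool))
    (A : (Fin n → X × Bool) → PMF (X → Bool)) : Prop :=
  ∀ S, (A S).support ⊆ C

/-- `(α,β)`-PAC empirical learner with sample complexity `m`. -/
def IsEmpiricalLearner {X : Type*} (C : Set (X → Bool)) (α β : ℝ) {m : ℕ}
    (A : (Fin m → X × Bool) → PMF (X → Bool)) : Prop :=
  ∀ c ∈ C, ∀ Sx : Fin m → X,
    ENNReal.ofReal (1 - β) ≤
      (A fun i => (Sx i, c (Sx i))).toOuterMeasure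
        {h | errS (fun i => (Sx i, c (Sx i))) h ≤ α}

/-- The exponential mechanism over a finite nonempty type, with the given exponents:
it outputs `h` with probability proportional to `exp (score h)`. -/
noncomputable def expMech {H : Type*} [Fintype H] [Nonempty H] (score : H → ℝ) : PMF H :=
  ⟨fun h => ENNReal.ofReal (Real.exp (score h)) / ∑ f, ENNReal.ofReal (Real.exp (score f)), by
    have h0 : (∑ f, ENNReal.ofReal (Real.exp (score f))) ≠ 0 := by
      intro hsum
      rw [Finset.sum_eq_zero_iff] at hsum
      obtain ⟨a⟩ := (inferInstance : Nonempty H)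
      have ha := hsum a (Finset.mem_univ a)
      rw [ENNReal.ofReal_eq_zero] at ha
      exact absurd ha (not_le.mpr (Real.exp_pos _))
    have htop : (∑ f, ENNReal.ofReal (Real.exp (score f))) ≠ ⊤ :=
      (ENNReal.sum_lt_top.mpr fun f _ => ENNReal.ofReal_lt_top).ne
    have key : ∑ h, ENNReal.ofReal (Real.exp (score h)) /
        ∑ f, ENNReal.ofReal (Real.exp (score f)) = 1 := by
      simp only [div_eq_mul_inv]
      rw [← Finset.sum_mul]
      exact ENNReal.mul_inv_cancel h0 htop
    have hs := hasSum_fintype (fun h => ENNReal.ofReal (Real.exp (score h)) /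
      ∑ f, ENNReal.ofReal (Real.exp (score f)))
    rwa [key] at hs⟩

/-- The score used by the relabeling procedure: `q(T∘W, h) = inf_{f∈C} (dis_{T_X}(h,f) + err_W(f))`. -/
noncomputable def qScore {X : Type*} (C : Set (X → Bool)) {t w : ℕ}
    (T : Fin t → X × Bool) (W : Fin w → X × Bool) (h : X → Bool) : ℝ :=
  ⨅ f : C, (disS (fun i => (T i).1) h (f : X → Bool) + errS W (f : X → Bool))

/-- The hypothesis-selection step of the relabeling procedure `Rel`:
the candidate set contains, for each labeling of `T_X` realized by `C`, the concept
`pick g ∈ C` chosen for that labeling; a hypothesis is selected by the exponential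
mechanism with privacy parameter `ε`, score `qScore`, and sensitivity `Δ = 1/|W|`. -/
noncomputable def relPMF {X : Type*} (C : Set (X → Bool)) (hC : C.Nonempty) (ε : ℝ)
    {t w : ℕ} (T : Fin t → X × Bool) (W : Fin w → X × Bool)
    (pick : (Fin t → Bool) → (X → Bool)) : PMF (X → Bool) :=
  letI : Fintype {g : Fin t → Bool // ∃ c ∈ C, ∀ i, c (T i).1 = g i} := Fintype.ofFinite _
  haveI : Nonempty {g : Fin t → Bool // ∃ c ∈ C, ∀ i, c (T i).1 = g i} := by
    obtain ⟨c, hc⟩ := hC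
    exact ⟨⟨fun i => c (T i).1, ⟨c, hc, fun _ => rfl⟩⟩⟩
  (expMech fun ℓ : {g : Fin t → Bool // ∃ c ∈ C, ∀ i, c (T i).1 = g i} =>
      -(ε * qScore C T W (pick ℓ.1) * w) / 2).map fun ℓ => pick ℓ.1

/-- The relabeling procedure `Rel`: select `h` as in `relPMF` and output `T` relabeled by `h`. -/
noncomputable def RelProc {X : Type*} (C : Set (X → Bool)) (hC : C.Nonempty) (ε : ℝ)
    {t w : ℕ} (T : Fin t → X × Bool) (W : Fin w → X × Bool)
    (pick : (Fin t → Bool) → (X → Bool)) : PMF (Fin t → X × Bool) :=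
  (relPMF C hC ε T W pick).map fun h i => ((T i).1, h (T i).1)

/-- The algorithm `Agn`: sample a uniformly random index set `I` of size `k`, split the
input into `T` (indexed by `I`) and `W` (the rest), run `Rel` with parameter `ε` on
`(T, W)` to obtain the relabeled dataset `T^h`, and output `A(T^h)`. -/
noncomputable def Agn {X Ω : Type*} (C : Set (X → Bool)) (hC : C.Nonempty) (ε : ℝ)
    {n k : ℕ} (hk : k ≤ n)
    (A : (Fin k → X × Bool) → PMF Ω)
    (pick : (Fin k → X) → (Fin k → Bool) → (X → Bool))
    (S : Fin n → X × Bool) : PMF Ω :=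
  haveI : Nonempty {I : Finset (Fin n) // I.card = k} := by
    obtain ⟨t, -, ht⟩ := Finset.exists_subset_card_eq
      (show k ≤ (Finset.univ : Finset (Fin n)).card by simpa using hk)
    exact ⟨⟨t, ht⟩⟩
  (PMF.uniformOfFintype {I : Finset (Fin n) // I.card = k}).bind fun I =>
    (RelProc C hC ε (fun j => S (I.1.orderIsoOfFin I.2 j).1)
        (fun j => S ((I.1ᶜ.orderIsoOfFin
          (show I.1ᶜ.card = n - k by simp [Finset.card_compl, I.2]) j)).1)
        (pick fun j => (S (I.1.orderIsoOfFin I.2 j).1).1)).bind fun Th =>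
      A Th

/-- The auxiliary algorithm `Aux`: run `Rel` on `T = U ∘ V` and `W` to obtain `T^h`,
select `h̄ = hbar V^h ∈ C` consistent with `V^h`, and output `A(T^h) ⊕ h̄`. -/
noncomputable def Aux {X : Type*} (C : Set (X → Bool)) (hC : C.Nonempty) (ε : ℝ)
    {u v w : ℕ} (U : Fin u → X × Bool) (V : Fin v → X × Bool) (W : Fin w → X × Bool)
    (pick : (Fin (u + v) → X) → (Fin (u + v) → Bool) → (X → Bool))
    (hbar : (Fin v → X × Bool) → (X → Bool))
    (A : (Fin (u + v) → X × Bool) → PMF (X → Bool)) : PMF (X → Bool) :=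
  (relPMF C hC ε (Fin.append U V) W (pick fun i => (Fin.append U V i).1)).bind fun h =>
    (A fun i => ((Fin.append U V i).1, h (Fin.append U V i).1)).map fun g x =>
      xor (g x) (hbar (fun j => ((V j).1, h (V j).1)) x)

/-- Error of a private prediction algorithm: the probability over `(x,y) ~ D` and the
algorithm's coins that the prediction on `x` differs from `y`. -/
noncomputable def errPred {X : Type*} [MeasurableSpace X] (D : Measure (X × Bool)) {n : ℕ}
    (A : (Fin n → X × Bool) → X → PMF Bool) (S : Fin n → X × Bool) : ℝ :=
  (∫⁻ p, (A S p.1).toOuterMeasure {b | b ≠ p.2} ∂D).toReal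

/-! Neighbouring `U₁, U₂` give datasets `T₁ = U₁ ∘ V` and `T₂ = U₂ ∘ V` differing in one entry.
Relabeling `T₂` by a concept realizing a labeling `ℓ` of `T₁` gives a labeling `φ ℓ` of `T₂` that
agrees with `ℓ` off that entry, so `φ` is at most two-to-one and moves the score `q` by at most
`1/|T|`. As `ε|W| ≤ |T|`, the exponent of the exponential mechanism moves by at most `1/2`, so
`Pr[ℓ] ≤ 2e · Pr[φ ℓ]` (the normalizer changes by at most `2 e^{1/2}`). The relabeled datasets
for `ℓ` and `φ ℓ` differ in at most one entry and give `V` the same labels, hence the same `h̄`,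
so `(1,δ)`-privacy of `A` bounds the output given `ℓ` by `e` times the output given `φ ℓ`
plus `δ`. Summing over `ℓ`, each `φ ℓ` counted at most twice, gives the factor
`2e · 2 · e = e^{2 + 2 ln 2}` and the additive term `4eδ`. -/

theorem Finset.sum_comp_le_card_mul_sum {α β κ : Type*} [Fintype α] [Fintype β] [Fintype κ]
    {f : α → ℝ} (hf : ∀ a, 0 ≤ f a) {ρ : β → α} {τ : β → κ}
    (hρτ : Function.Injective fun b => (ρ b, τ b)) :
    ∑ b, f (ρ b) ≤ Fintype.card κ * ∑ a, f a := by
  calc ∑ b, f (ρ b) = ∑ p ∈ Finset.univ.map ⟨_, hρτ⟩, f p.1 := by rw [Finset.sum_map]; rfl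
    _ ≤ ∑ p : α × κ, f p.1 := Finset.sum_le_univ_sum_of_nonneg fun p => hf p.1
    _ = Fintype.card κ * ∑ a, f a := by
      rw [Fintype.sum_prod_type, Finset.mul_sum]
      simp

theorem PMF.toOuterMeasure_bind_le_of_injective {α β κ Ω : Type*} [Fintype κ]
    {p : PMF α} {q : PMF β} {F : α → PMF Ω} {G : β → PMF Ω} {φ : α → β} {σ : α → κ}
    (hφσ : Function.Injective fun a => (φ a, σ a)) {c e δ : ℝ≥0∞} (hp : ∀ a, p a ≤ c * q (φ a))
    (O : Set Ω) (hF : ∀ a, (F a).toOuterMeasure O ≤ e * (G (φ a)).toOuterMeasure O + δ) :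
    (p.bind F).toOuterMeasure O ≤
      c * Fintype.card κ * (e * (q.bind G).toOuterMeasure O + δ) := by
  set g : β → ℝ≥0∞ := fun b => q b * (e * (G b).toOuterMeasure O + δ)
  have hg : ∑' b, g b = e * (q.bind G).toOuterMeasure O + δ := by
    simp only [g, mul_add, ENNReal.tsum_add, PMF.toOuterMeasure_bind_apply, mul_left_comm _ e,
      ENNReal.tsum_mul_left, ENNReal.tsum_mul_right, PMF.tsum_coe, one_mul]
  rw [PMF.toOuterMeasure_bind_apply, ← hg, mul_assoc, ← ENNReal.tsum_mul_left,
    ← ENNReal.tsum_mul_left]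
  calc ∑' a, p a * (F a).toOuterMeasure O ≤ ∑' a, c * g (φ a, σ a).1 :=
        ENNReal.tsum_le_tsum fun a => (mul_le_mul' (hp a) (hF a)).trans_eq (mul_assoc _ _ _)
    _ ≤ ∑' x : β × κ, c * g x.1 := ENNReal.tsum_comp_le_tsum_of_injective hφσ fun x => c * g x.1
    _ = ∑' b, c * (Fintype.card κ * g b) := by
      rw [ENNReal.tsum_prod']
      congr 1 with b
      simp [tsum_fintype]
      ring

theorem expMech_apply_eq_ofReal {H : Type*} [Fintype H] [Nonempty H] (s : H → ℝ) (a : H) :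
    expMech s a = ENNReal.ofReal (Real.exp (s a) / ∑ b, Real.exp (s b)) := by
  rw [ENNReal.ofReal_div_of_pos (Finset.sum_pos (fun b _ => Real.exp_pos _) Finset.univ_nonempty),
    ENNReal.ofReal_sum_of_nonneg fun b _ => (Real.exp_pos _).le]
  rfl

theorem expMech_le_of_score_le {H₁ H₂ κ : Type*} [Fintype H₁] [Nonempty H₁] [Fintype H₂]
    [Nonempty H₂] [Fintype κ] {s₁ : H₁ → ℝ} {s₂ : H₂ → ℝ} {Δ : ℝ} {φ : H₁ → H₂} {ρ : H₂ → H₁}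
    {τ : H₂ → κ} (hφ : ∀ a, s₁ a ≤ s₂ (φ a) + Δ) (hρ : ∀ b, s₂ b ≤ s₁ (ρ b) + Δ)
    (hρτ : Function.Injective fun b => (ρ b, τ b)) (a : H₁) :
    expMech s₁ a ≤ ENNReal.ofReal (Fintype.card κ * Real.exp (2 * Δ)) * expMech s₂ (φ a) := by
  set Z₁ := ∑ a, Real.exp (s₁ a)
  set Z₂ := ∑ b, Real.exp (s₂ b)
  have hZ₁ : 0 < Z₁ := Finset.sum_pos (fun _ _ => Real.exp_pos _) Finset.univ_nonempty
  have hZ₂ : 0 < Z₂ := Finset.sum_pos (fun _ _ => Real.exp_pos _) Finset.univ_nonempty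
  have hnum : Real.exp (s₁ a) ≤ Real.exp Δ * Real.exp (s₂ (φ a)) := by
    rw [← Real.exp_add, Real.exp_le_exp]; linarith [hφ a]
  have hZ : Z₂ ≤ Real.exp Δ * (Fintype.card κ * Z₁) :=
    calc Z₂ ≤ ∑ b, Real.exp Δ * Real.exp (s₁ (ρ b)) := Finset.sum_le_sum fun b _ => by
          rw [← Real.exp_add, Real.exp_le_exp]; linarith [hρ b]
      _ ≤ Real.exp Δ * (Fintype.card κ * Z₁) := by
          rw [← Finset.mul_sum]
          gcongr
          exact Finset.sum_comp_le_card_mul_sum (fun _ => (Real.exp_pos _).le) hρτ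
  rw [expMech_apply_eq_ofReal, expMech_apply_eq_ofReal, ← ENNReal.ofReal_mul (by positivity)]
  refine ENNReal.ofReal_le_ofReal ?_
  rw [mul_div_assoc', div_le_div_iff₀ hZ₁ hZ₂, two_mul, Real.exp_add]
  calc Real.exp (s₁ a) * Z₂
      ≤ (Real.exp Δ * Real.exp (s₂ (φ a))) * (Real.exp Δ * (Fintype.card κ * Z₁)) :=
        mul_le_mul hnum hZ hZ₂.le (by positivity)
    _ = _ := by ring

theorem Real.exp_two_add_two_mul_log_two :
    Real.exp (2 + 2 * Real.log 2) = 2 * Real.exp 1 * 2 * Real.exp 1 := by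
  rw [show (2 : ℝ) + 2 * Real.log 2 = 1 + 1 + Real.log 2 + Real.log 2 by ring]
  simp only [Real.exp_add, Real.exp_log two_pos]
  ring

theorem IsDP.toOuterMeasure_le_of_forall_ne {Z Ω : Type*} {n : ℕ} {A : (Fin n → Z) → PMF Ω}
    {ε δ : ℝ} (hA : IsDP A ε δ) (hε : 0 ≤ ε) {S₁ S₂ : Fin n → Z} {i : Fin n}
    (hS : ∀ j, j ≠ i → S₁ j = S₂ j) (O : Set Ω) :
    (A S₁).toOuterMeasure O ≤
      ENNReal.ofReal (Real.exp ε) * (A S₂).toOuterMeasure O + ENNReal.ofReal δ := by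
  by_cases hi : S₁ i = S₂ i
  · obtain rfl : S₁ = S₂ := funext fun j => by
      rcases eq_or_ne j i with rfl | hj
      exacts [hi, hS j hj]
    calc (A S₁).toOuterMeasure O ≤ ENNReal.ofReal (Real.exp ε) * (A S₁).toOuterMeasure O :=
          le_mul_of_one_le_left' (ENNReal.one_le_ofReal.2 (Real.one_le_exp hε))
      _ ≤ _ := le_self_add
  · exact hA S₁ S₂ ⟨i, hi, hS⟩ O

theorem Fin.append_eq_append_of_ne {Z : Type*} {u v : ℕ} {U₁ U₂ : Fin u → Z} (V : Fin v → Z)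
    {i : Fin u} (hU : ∀ j, j ≠ i → U₁ j = U₂ j) :
    ∀ j, j ≠ Fin.castAdd v i → Fin.append U₁ V j = Fin.append U₂ V j := by
  intro j
  refine Fin.addCases (fun k hk => ?_) (fun k _ => ?_) j
  · rw [Fin.append_left, Fin.append_left]
    exact hU k fun h => hk (h ▸ rfl)
  · rw [Fin.append_right, Fin.append_right]

theorem Fin.natAdd_ne_castAdd {u v : ℕ} (j : Fin v) (i : Fin u) :
    Fin.natAdd u j ≠ Fin.castAdd v i := by
  intro h
  have := congrArg Fin.val h
  simp only [Fin.val_natAdd, Fin.val_castAdd] at this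
  omega

section Score

variable {X : Type*}

theorem disS_le_disS_add_of_forall_ne {t : ℕ} {xs₁ xs₂ : Fin t → X} {h₁ h₂ : X → Bool}
    (f : X → Bool) {i : Fin t} (hag : ∀ j, j ≠ i → xs₁ j = xs₂ j ∧ h₁ (xs₁ j) = h₂ (xs₂ j)) :
    disS xs₁ h₁ f ≤ disS xs₂ h₂ f + 1 / t := by
  classical
  have hsub : (Finset.univ.filter fun j => h₁ (xs₁ j) ≠ f (xs₁ j)) ⊆
      insert i (Finset.univ.filter fun j => h₂ (xs₂ j) ≠ f (xs₂ j)) := by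
    intro j hj
    rcases eq_or_ne j i with rfl | hji
    · exact Finset.mem_insert_self _ _
    · obtain ⟨hx, hh⟩ := hag j hji
      simp only [Finset.mem_insert, Finset.mem_filter, Finset.mem_univ, true_and] at hj ⊢
      rw [hx] at hj hh
      rw [← hh]
      exact Or.inr hj
  have hcard := (Finset.card_le_card hsub).trans (Finset.card_insert_le _ _)
  rw [disS, disS, ← add_div]
  exact div_le_div_of_nonneg_right (by exact_mod_cast hcard) t.cast_nonneg

theorem qScore_le_qScore_add_of_forall_ne {C : Set (X → Bool)} (hC : C.Nonempty) {t w : ℕ}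
    {T₁ T₂ : Fin t → X × Bool} (W : Fin w → X × Bool) {h₁ h₂ : X → Bool} {i : Fin t}
    (hag : ∀ j, j ≠ i → (T₁ j).1 = (T₂ j).1 ∧ h₁ (T₁ j).1 = h₂ (T₂ j).1) :
    qScore C T₁ W h₁ ≤ qScore C T₂ W h₂ + 1 / t := by
  have : Nonempty C := hC.to_subtype
  rw [← sub_le_iff_le_add]
  refine le_ciInf fun f => sub_le_iff_le_add.2 ?_
  have hbdd : BddBelow (Set.range fun f : C => disS (fun j => (T₁ j).1) h₁ f + errS W f) :=
    ⟨0, by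
      rintro _ ⟨f, rfl⟩
      exact add_nonneg (by unfold disS; positivity) (by unfold errS; positivity)⟩
  calc qScore C T₁ W h₁ ≤ disS (fun j => (T₁ j).1) h₁ f + errS W f := ciInf_le hbdd f
    _ ≤ disS (fun j => (T₂ j).1) h₂ f + errS W f + 1 / t := by
      linarith [disS_le_disS_add_of_forall_ne (f : X → Bool) hag]

end Score

section Relabeling

variable {X : Type*} (C : Set (X → Bool)) {t : ℕ}

abbrev Labelings (xs : Fin t → X) : Type _ := {g : Fin t → Bool // ∃ c ∈ C, ∀ i, c (xs i) = g i}

noncomputable def relScore (ε : ℝ) {w : ℕ} (T : Fin t → X × Bool) (W : Fin w → X × Bool)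
    (pick : (Fin t → Bool) → X → Bool) (ℓ : Labelings C fun i => (T i).1) : ℝ :=
  -(ε * qScore C T W (pick ℓ.1) * w) / 2

variable {C}

theorem Labelings.nonempty (hC : C.Nonempty) (xs : Fin t → X) : Nonempty (Labelings C xs) :=
  ⟨⟨fun i => hC.choose (xs i), hC.choose, hC.choose_spec, fun _ => rfl⟩⟩

noncomputable def Labelings.transfer {xs : Fin t → X} (ℓ : Labelings C xs) (ys : Fin t → X) :
    Labelings C ys :=
  ⟨fun i => ℓ.2.choose (ys i), ℓ.2.choose, ℓ.2.choose_spec.1, fun _ => rfl⟩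

theorem Labelings.transfer_apply_of_eq {xs ys : Fin t → X} (ℓ : Labelings C xs) {j : Fin t}
    (hj : xs j = ys j) : (ℓ.transfer ys).1 j = ℓ.1 j := by
  show ℓ.2.choose (ys j) = ℓ.1 j
  rw [← hj]
  exact ℓ.2.choose_spec.2 j

theorem Labelings.injective_transfer_prod {xs ys : Fin t → X} {i : Fin t}
    (hxy : ∀ j, j ≠ i → xs j = ys j) :
    Function.Injective fun ℓ : Labelings C xs => (ℓ.transfer ys, ℓ.1 i) := by
  intro ℓ₁ ℓ₂ h
  simp only [Prod.mk.injEq] at h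
  refine Subtype.ext (funext fun j => ?_)
  rcases eq_or_ne j i with rfl | hj
  · exact h.2
  · rw [← ℓ₁.transfer_apply_of_eq (hxy j hj), ← ℓ₂.transfer_apply_of_eq (hxy j hj), h.1]

theorem relPMF_eq_map (hC : C.Nonempty) (ε : ℝ) {w : ℕ} (T : Fin t → X × Bool)
    (W : Fin w → X × Bool) (pick : (Fin t → Bool) → X → Bool)
    [Fintype (Labelings C fun i => (T i).1)] [Nonempty (Labelings C fun i => (T i).1)] :
    relPMF C hC ε T W pick = (expMech (relScore C ε T W pick)).map fun ℓ => pick ℓ.1 := by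
  unfold relPMF
  congr
  exact Subsingleton.elim _ _

theorem Labelings.pick_transfer_eq {xs ys : Fin t → X}
    {pick₁ pick₂ : (Fin t → Bool) → X → Bool}
    (hpick₁ : ∀ (ℓ : Labelings C xs) j, pick₁ ℓ.1 (xs j) = ℓ.1 j)
    (hpick₂ : ∀ (ℓ : Labelings C ys) j, pick₂ ℓ.1 (ys j) = ℓ.1 j)
    (ℓ : Labelings C xs) {j : Fin t} (hj : xs j = ys j) :
    pick₁ ℓ.1 (xs j) = pick₂ (ℓ.transfer ys).1 (ys j) := by
  rw [hpick₁, hpick₂, ℓ.transfer_apply_of_eq hj]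

theorem relScore_le_relScore_transfer_add (hC : C.Nonempty) {ε : ℝ} (hε : 0 ≤ ε) {w : ℕ}
    (hεw : ε * w ≤ t) {T₁ T₂ : Fin t → X × Bool} (W : Fin w → X × Bool) {i : Fin t}
    (hT : ∀ j, j ≠ i → (T₁ j).1 = (T₂ j).1) {pick₁ pick₂ : (Fin t → Bool) → X → Bool}
    (hpick₁ : ∀ (ℓ : Labelings C fun j => (T₁ j).1) j, pick₁ ℓ.1 (T₁ j).1 = ℓ.1 j)
    (hpick₂ : ∀ (ℓ : Labelings C fun j => (T₂ j).1) j, pick₂ ℓ.1 (T₂ j).1 = ℓ.1 j)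
    (ℓ : Labelings C fun j => (T₁ j).1) :
    relScore C ε T₁ W pick₁ ℓ ≤
      relScore C ε T₂ W pick₂ (ℓ.transfer fun j => (T₂ j).1) + 1 / 2 := by
  have hq := qScore_le_qScore_add_of_forall_ne hC W (i := i) fun j hj =>
    ⟨(hT j hj).symm, (ℓ.pick_transfer_eq hpick₁ hpick₂ (hT j hj)).symm⟩
  have hεw' : ε * w * (1 / t) ≤ 1 := by
    rcases t.eq_zero_or_pos with rfl | ht
    · simp
    · rw [mul_one_div, div_le_one (by exact_mod_cast ht)]
      exact hεw
  unfold relScore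
  nlinarith [mul_le_mul_of_nonneg_left hq (by positivity : 0 ≤ ε * w)]

end Relabeling

section AuxAlgorithm

variable {X : Type*} {u v : ℕ}

noncomputable def auxOutput (U : Fin u → X × Bool) (V : Fin v → X × Bool)
    (hbar : (Fin v → X × Bool) → X → Bool) (A : (Fin (u + v) → X × Bool) → PMF (X → Bool))
    (h : X → Bool) : PMF (X → Bool) :=
  (A fun i => ((Fin.append U V i).1, h (Fin.append U V i).1)).map fun g x =>
    xor (g x) (hbar (fun j => ((V j).1, h (V j).1)) x)

theorem Aux_eq_bind (C : Set (X → Bool)) (hC : C.Nonempty) (ε : ℝ) {w : ℕ}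
    (U : Fin u → X × Bool) (V : Fin v → X × Bool) (W : Fin w → X × Bool)
    (pick : (Fin (u + v) → X) → (Fin (u + v) → Bool) → X → Bool)
    (hbar : (Fin v → X × Bool) → X → Bool) (A : (Fin (u + v) → X × Bool) → PMF (X → Bool))
    [Fintype (Labelings C fun i => (Fin.append U V i).1)]
    [Nonempty (Labelings C fun i => (Fin.append U V i).1)] :
    Aux C hC ε U V W pick hbar A =
      (expMech (relScore C ε (Fin.append U V) W (pick fun i => (Fin.append U V i).1))).bind
        fun ℓ => auxOutput U V hbar A (pick (fun i => (Fin.append U V i).1) ℓ.1) := by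
  rw [Aux, relPMF_eq_map, PMF.bind_map]
  rfl

theorem auxOutput_le {A : (Fin (u + v) → X × Bool) → PMF (X → Bool)} {ε δ : ℝ}
    (hA : IsDP A ε δ) (hε : 0 ≤ ε) {U₁ U₂ : Fin u → X × Bool} (V : Fin v → X × Bool)
    (hbar : (Fin v → X × Bool) → X → Bool) {i : Fin u} (hU : ∀ j, j ≠ i → U₁ j = U₂ j)
    {h₁ h₂ : X → Bool}
    (hh : ∀ j, j ≠ Fin.castAdd v i → h₁ (Fin.append U₁ V j).1 = h₂ (Fin.append U₂ V j).1)
    (O : Set (X → Bool)) :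
    (auxOutput U₁ V hbar A h₁).toOuterMeasure O ≤
      ENNReal.ofReal (Real.exp ε) * (auxOutput U₂ V hbar A h₂).toOuterMeasure O
        + ENNReal.ofReal δ := by
  have hV : (fun j => ((V j).1, h₁ (V j).1)) = fun j => ((V j).1, h₂ (V j).1) := by
    funext j
    simpa using hh _ (Fin.natAdd_ne_castAdd j i)
  simp only [auxOutput, hV, PMF.toOuterMeasure_map_apply]
  refine hA.toOuterMeasure_le_of_forall_ne hε (i := Fin.castAdd v i) (fun j hj => ?_) _
  rw [hh j hj, Fin.append_eq_append_of_ne V hU j hj]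

end AuxAlgorithm

theorem privacy_of_Aux_general {X : Type*} (C : Set (X → Bool)) (hC : C.Nonempty)
    (ε δ : ℝ) {u v w : ℕ} (n : ℕ)
    (V : Fin v → X × Bool) (W : Fin w → X × Bool)
    (pick : (Fin (u + v) → X) → (Fin (u + v) → Bool) → (X → Bool))
    (hbar : (Fin v → X × Bool) → (X → Bool))
    (A : (Fin (u + v) → X × Bool) → PMF (X → Bool))
    (hε : 0 < ε) (hε1 : ε ≤ 1)
    (hpick : ∀ (xs : Fin (u + v) → X) (g : Fin (u + v) → Bool),
      (∃ c ∈ C, ∀ i, c (xs i) = g i) → pick xs g ∈ C ∧ ∀ i, pick xs g (xs i) = g i)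
    (hT : ε * (n : ℝ) ≤ ((u + v : ℕ) : ℝ)) (hW : (w : ℝ) ≤ (n : ℝ) - ε * (n : ℝ))
    (hA : IsDP A 1 δ) :
    ∀ U₁ U₂ : Fin u → X × Bool, Neighboring U₁ U₂ → ∀ O : Set (X → Bool),
      (Aux C hC ε U₁ V W pick hbar A).toOuterMeasure O ≤
        ENNReal.ofReal (Real.exp (2 + 2 * Real.log 2)) *
          (Aux C hC ε U₂ V W pick hbar A).toOuterMeasure O
        + ENNReal.ofReal (4 * Real.exp 1 * δ) := by
  classical
  intro U₁ U₂ ⟨i, _, hU⟩ O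
  have hxs (j) (hj : j ≠ Fin.castAdd v i) : (Fin.append U₁ V j).1 = (Fin.append U₂ V j).1 :=
    congrArg Prod.fst (Fin.append_eq_append_of_ne V hU j hj)
  have hεw : ε * w ≤ (u + v : ℕ) := by nlinarith
  have hpick' (U : Fin u → X × Bool) (ℓ : Labelings C fun j => (Fin.append U V j).1) j :
      pick (fun j => (Fin.append U V j).1) ℓ.1 (Fin.append U V j).1 = ℓ.1 j :=
    (hpick _ ℓ.1 ℓ.2).2 j
  have := Labelings.nonempty hC fun j => (Fin.append U₁ V j).1
  have := Labelings.nonempty hC fun j => (Fin.append U₂ V j).1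
  have hmech := expMech_le_of_score_le
    (relScore_le_relScore_transfer_add hC hε.le hεw W hxs (hpick' U₁) (hpick' U₂))
    (relScore_le_relScore_transfer_add hC hε.le hεw W (fun j hj => (hxs j hj).symm)
      (hpick' U₂) (hpick' U₁))
    (Labelings.injective_transfer_prod fun j hj => (hxs j hj).symm)
  calc (Aux C hC ε U₁ V W pick hbar A).toOuterMeasure O
      ≤ ENNReal.ofReal (Fintype.card Bool * Real.exp (2 * (1 / 2))) * Fintype.card Bool *
          (ENNReal.ofReal (Real.exp 1) * (Aux C hC ε U₂ V W pick hbar A).toOuterMeasure O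
            + ENNReal.ofReal δ) := by
        rw [Aux_eq_bind, Aux_eq_bind]
        refine PMF.toOuterMeasure_bind_le_of_injective
          (Labelings.injective_transfer_prod hxs) hmech O fun ℓ => ?_
        exact auxOutput_le hA zero_le_one V hbar hU
          (fun j hj => ℓ.pick_transfer_eq (hpick' U₁) (hpick' U₂) (hxs j hj)) O
    _ = _ := by
      rw [Real.exp_two_add_two_mul_log_two, Fintype.card_bool,
        show 4 * Real.exp 1 * δ = 2 * Real.exp 1 * 2 * δ by ring]
      norm_num [ENNReal.ofReal_mul, Real.exp_nonneg, mul_add, mul_assoc]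

/-- Claim 3.7, privacy of `Aux` with respect to `U`. -/
theorem privacy_of_Aux {X : Type*} (C : Set (X → Bool)) (hC : C.Nonempty)
    (ε δ : ℝ) {u v w : ℕ} (n : ℕ)
    (V : Fin v → X × Bool) (W : Fin w → X × Bool)
    (pick : (Fin (u + v) → X) → (Fin (u + v) → Bool) → (X → Bool))
    (hbar : (Fin v → X × Bool) → (X → Bool))
    (A : (Fin (u + v) → X × Bool) → PMF (X → Bool))
    (hε : 0 < ε) (hε1 : ε ≤ 1) (hδ : 0 ≤ δ)
    (hpick : ∀ (xs : Fin (u + v) → X) (g : Fin (u + v) → Bool),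
      (∃ c ∈ C, ∀ i, c (xs i) = g i) → pick xs g ∈ C ∧ ∀ i, pick xs g (xs i) = g i)
    (hhbar : ∀ Vl : Fin v → X × Bool, (∃ c ∈ C, ∀ j, c (Vl j).1 = (Vl j).2) →
      hbar Vl ∈ C ∧ ∀ j, hbar Vl (Vl j).1 = (Vl j).2)
    (hT : ε * (n : ℝ) ≤ ((u + v : ℕ) : ℝ)) (hW : (w : ℝ) ≤ (n : ℝ) - ε * (n : ℝ))
    (hA : IsDP A 1 δ) :
    ∀ U₁ U₂ : Fin u → X × Bool, Neighboring U₁ U₂ → ∀ O : Set (X → Bool),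
      (Aux C hC ε U₁ V W pick hbar A).toOuterMeasure O ≤
        ENNReal.ofReal (Real.exp (2 + 2 * Real.log 2)) *
          (Aux C hC ε U₂ V W pick hbar A).toOuterMeasure O
        + ENNReal.ofReal (4 * Real.exp 1 * δ) :=
  privacy_of_Aux_general C hC ε δ n V W pick hbar A hε hε1 hpick hT hW hA
end

section
/- Let ε ≤ 1 and let A be an (ε,δ)-differentially private algorithm taking a dataset of size m as input. For any n with n ≥ 2 and 6εm/n ≤ 1, define A' on input a dataset S of size n by: construct a dataset T of size m where each point is sampled independently and uniformly from S with replacement, and run A on T. Then A' is (ε',δ')-differentially private with ε' = 6εm/n and δ' = exp(6εm/n)·(4m/n)·δ. -/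
open MeasureTheory
open scoped ENNReal

/-! Fix the position `i` where the neighbouring datasets differ and couple a uniform index map
`f : Fin m → Fin n` with the map `f'` obtained by replacing every index `i` in `f` by a fresh
uniform index different from `i`. Then `S₁ ∘ f` and `S₂ ∘ f'`, as well as `S₂ ∘ f'` and `S₂ ∘ f`,
differ only in the `k` positions where `f` hits `i`, so group privacy compares them at cost
`e^{kε}`. The weights `e^{±kε}` are products over the coordinates, so summing over the coupling
gives, with `G` the sum over index maps avoiding `i`,
`(n - 1)^m ∑ P[A(S₁ ∘ f)] ≲ (e^ε + n - 1)^m G` and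
`(e^{-ε} + n - 1)^m G ≲ (n - 1)^m ∑ P[A(S₂ ∘ f)]`,
while `(e^ε + n - 1) / (e^{-ε} + n - 1) ≤ e^{6ε/n}` for `ε ≤ 1 ≤ n / 2`.
The `δ` terms are the sums of `k e^{kε}`, again computed coordinatewise. -/

open Finset

theorem PMF.toOuterMeasure_apply_ne_top {α : Type*} (p : PMF α) (s : Set α) :
    p.toOuterMeasure s ≠ ⊤ :=
  ne_top_of_le_ne_top ENNReal.one_ne_top <| by
    rw [PMF.toOuterMeasure_apply, ← p.tsum_coe]
    exact ENNReal.tsum_le_tsum (Set.indicator_le_self s p)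

theorem PMF.toReal_toOuterMeasure_uniformOfFintype_bind {F α : Type*} [Fintype F] [Nonempty F]
    (g : F → PMF α) (s : Set α) :
    (((PMF.uniformOfFintype F).bind g).toOuterMeasure s).toReal =
      (∑ f, ((g f).toOuterMeasure s).toReal) / Fintype.card F := by
  rw [PMF.toOuterMeasure_bind_apply, tsum_fintype]
  simp_rw [PMF.uniformOfFintype_apply]
  rw [← mul_sum, ENNReal.toReal_mul,
    ENNReal.toReal_sum fun f _ => (g f).toOuterMeasure_apply_ne_top s, div_eq_inv_mul,
    ENNReal.toReal_inv, ENNReal.toReal_natCast]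

section Privacy

variable {Z Ω : Type*} {m : ℕ} {A : (Fin m → Z) → PMF Ω} {ε δ : ℝ}

theorem isDP_iff_toReal (hδ : 0 ≤ δ) :
    IsDP A ε δ ↔ ∀ S₁ S₂, Neighboring S₁ S₂ → ∀ O : Set Ω,
      ((A S₁).toOuterMeasure O).toReal ≤
        Real.exp ε * ((A S₂).toOuterMeasure O).toReal + δ := by
  refine forall₄_congr fun S₁ S₂ _ O => ?_
  rw [← ENNReal.ofReal_le_ofReal_iff (by positivity),
    ENNReal.ofReal_toReal ((A S₁).toOuterMeasure_apply_ne_top O),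
    ENNReal.ofReal_add (by positivity) hδ, ENNReal.ofReal_mul (Real.exp_pos ε).le,
    ENNReal.ofReal_toReal ((A S₂).toOuterMeasure_apply_ne_top O)]

theorem IsDP.toReal_le_update [DecidableEq Z] (hA : IsDP A ε δ) (hε : 0 ≤ ε) (hδ : 0 ≤ δ)
    (O : Set Ω) (T : Fin m → Z) (j : Fin m) (z : Z) :
    ((A T).toOuterMeasure O).toReal ≤
      Real.exp ε * ((A (Function.update T j z)).toOuterMeasure O).toReal + δ := by
  by_cases hz : T j = z
  · rw [← hz, Function.update_eq_self]
    nlinarith [Real.one_le_exp hε, ENNReal.toReal_nonneg (a := (A T).toOuterMeasure O)]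
  · refine (isDP_iff_toReal hδ).1 hA _ _ ⟨j, by simpa using hz, fun l hl => ?_⟩ O
    rw [Function.update_of_ne hl]

theorem IsDP.toReal_le_of_eqOn_compl (hA : IsDP A ε δ) (hε : 0 ≤ ε) (hδ : 0 ≤ δ) (O : Set Ω)
    {T₁ T₂ : Fin m → Z} (D : Finset (Fin m)) (hT : ∀ j ∉ D, T₁ j = T₂ j) :
    ((A T₁).toOuterMeasure O).toReal ≤
      Real.exp ε ^ #D * ((A T₂).toOuterMeasure O).toReal + #D * Real.exp ε ^ #D * δ := by
  classical
  induction D using Finset.induction_on generalizing T₁ with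
  | empty =>
    obtain rfl : T₁ = T₂ := funext fun j => hT j (notMem_empty j)
    simp
  | insert j D hj ih =>
    have hD : ∀ l ∉ D, Function.update T₁ j (T₂ j) l = T₂ l := by
      intro l hl
      by_cases hlj : l = j
      · rw [hlj, Function.update_self]
      · rw [Function.update_of_ne hlj, hT l (by simp [hlj, hl])]
    have hδ' : δ ≤ Real.exp ε ^ (#D + 1) * δ :=
      le_mul_of_one_le_left hδ (one_le_pow₀ (Real.one_le_exp hε))
    rw [card_insert_of_notMem hj]
    push_cast
    linear_combination hA.toReal_le_update hε hδ O T₁ j (T₂ j) + Real.exp ε * ih hD + hδ'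

end Privacy

theorem sum_prod_mul_comp {κ R C β : Type*} [Fintype κ] [DecidableEq κ] [CommSemiring R]
    [Fintype C] [Fintype β] [DecidableEq β] (out : C → β) (w : κ → C → R) (φ : (κ → β) → R) :
    ∑ q : κ → C, (∏ j, w j (q j)) * φ (fun j => out (q j)) =
      ∑ g : κ → β, (∏ j, ∑ u with out u = g j, w j u) * φ g := by
  rw [← sum_fiberwise univ (fun q j => out (q j))]
  refine sum_congr rfl fun g _ => ?_
  rw [prod_univ_sum, sum_mul]
  refine sum_congr (by ext q; simp [funext_iff]) fun q hq => ?_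
  have hqg : (fun j => out (q j)) = g :=
    funext fun j => by simpa using Fintype.mem_piFinset.1 hq j
  rw [hqg]

theorem sum_comp_fst {κ ι ν R : Type*} [Fintype κ] [DecidableEq κ] [Fintype ι] [Fintype ν]
    [AddCommMonoid R] (φ : (κ → ι) → R) :
    ∑ q : κ → ι × ν, φ (fun j => (q j).1) = (Fintype.card ν ^ Fintype.card κ) • ∑ f, φ f := by
  rw [← (Equiv.arrowProdEquivProdArrow κ (fun _ => ι) (fun _ => ν)).symm.sum_comp,
    Fintype.sum_prod_type_right]
  simp [Fintype.card_pi]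

section Resampling

variable {κ ι : Type*} [DecidableEq ι] (i : ι)

/-- A pair `(v, w)` is an index together with a replacement for it, used only if `v = i`. -/
def resample (u : ι × {v // v ≠ i}) : ι := if u.1 = i then u.2 else u.1

theorem resample_ne (u : ι × {v // v ≠ i}) : resample i u ≠ i := by
  unfold resample
  split_ifs with h
  exacts [u.2.2, h]

variable [Fintype κ]

def hits (q : κ → ι × {v // v ≠ i}) : Finset κ := {j | (q j).1 = i}

theorem resample_eq_fst_of_notMem_hits {q : κ → ι × {v // v ≠ i}} {j : κ} (hj : j ∉ hits i q) :
    resample i (q j) = (q j).1 :=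
  if_neg (by simpa [hits] using hj)

theorem prod_ite_eq_pow_card_hits {M : Type*} [CommMonoid M] (x : M)
    (q : κ → ι × {v // v ≠ i}) :
    ∏ j, (if (q j).1 = i then x else 1) = x ^ #(hits i q) := by
  rw [prod_ite, prod_const, prod_const_one, mul_one, hits]

variable [Fintype ι] {R : Type*} [CommRing R]

theorem cast_card_subtype_ne : ((Fintype.card {v // v ≠ i} : ℕ) : R) = Fintype.card ι - 1 := by
  rw [Fintype.card_subtype_compl, Fintype.card_subtype_eq,
    Nat.cast_sub (Fintype.card_pos_iff.2 ⟨i⟩), Nat.cast_one]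

theorem sum_ite_eq_const (x y : R) :
    ∑ v, (if v = i then x else y) = x + (Fintype.card ι - 1) * y := by
  rw [Fintype.sum_eq_add_sum_compl i, if_pos rfl,
    sum_congr rfl fun v hv => if_neg (by simpa using hv), sum_const, card_compl]
  simp [Nat.cast_pred (Fintype.card_pos_iff.2 ⟨i⟩)]

theorem sum_ite_fst_eq_const (x y : R) :
    ∑ u : ι × {v // v ≠ i}, (if u.1 = i then x else y) =
      (Fintype.card ι - 1) * (x + (Fintype.card ι - 1) * y) := by
  rw [Fintype.sum_prod_type' (fun v _ => if v = i then x else y)]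
  simp [sum_ite_eq_const, Nat.cast_pred (Fintype.card_pos_iff.2 ⟨i⟩)]
  ring

theorem sum_resample_eq (x : R) (v : ι) :
    ∑ u with resample i u = v, (if u.1 = i then x else 1) =
      if v ≠ i then x + (Fintype.card ι - 1) else 0 := by
  by_cases hv : v = i
  · subst hv
    simp [resample_ne]
  have replaced : ∑ w : {v // v ≠ i}, (if (w : ι) = v then x else 0) = x := by
    rw [Fintype.sum_eq_single ⟨v, hv⟩ fun w hw => if_neg fun h => hw (Subtype.ext h), if_pos rfl]
  have kept : ∀ v' ∈ ({i}ᶜ : Finset ι), ∑ w : {v // v ≠ i},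
      (if resample i (v', w) = v then (if v' = i then x else 1) else 0) =
        if v' = v then (Fintype.card ι - 1 : R) else 0 := by
    intro v' hv'
    simp [resample, (by simpa using hv' : v' ≠ i), Nat.cast_pred (Fintype.card_pos_iff.2 ⟨i⟩)]
  rw [sum_filter, Fintype.sum_prod_type' fun v' w =>
    if resample i (v', w) = v then (if v' = i then x else 1) else 0,
    Fintype.sum_eq_add_sum_compl i, sum_congr rfl kept, sum_ite_eq']
  simp [resample, replaced, hv]

variable [DecidableEq κ]

theorem sum_pow_card_hits_mul_comp_resample (x : R) (φ : (κ → ι) → R) :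
    ∑ q : κ → ι × {v // v ≠ i}, x ^ #(hits i q) * φ (fun j => resample i (q j)) =
      (x + (Fintype.card ι - 1)) ^ Fintype.card κ * ∑ f with ∀ j, f j ≠ i, φ f := by
  simp_rw [← prod_ite_eq_pow_card_hits i x]
  rw [sum_prod_mul_comp (resample i) (fun _ u => if u.1 = i then x else 1)]
  simp_rw [sum_resample_eq, Fintype.prod_ite_zero, prod_const, card_univ, ite_mul, zero_mul,
    sum_ite, sum_const_zero, add_zero, mul_sum]

theorem sum_card_hits_mul_pow (x : R) :
    ∑ q : κ → ι × {v // v ≠ i}, (#(hits i q) : R) * x ^ #(hits i q) =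
      Fintype.card κ * (Fintype.card ι - 1) ^ Fintype.card κ * x *
        (x + (Fintype.card ι - 1)) ^ (Fintype.card κ - 1) := by
  -- `k x ^ k` is a sum over the hits `j`, each term a product with position `j` forced to hit
  have hit_at (q : κ → ι × {v // v ≠ i}) (j : κ) :
      ∏ j', (if (q j').1 = i then x else if j' = j then 0 else 1) =
        if (q j).1 = i then x ^ #(hits i q) else 0 := by
    split_ifs with hj
    · rw [← prod_ite_eq_pow_card_hits]
      exact prod_congr rfl fun j' _ => by split_ifs <;> simp_all
    · exact prod_eq_zero (mem_univ j) (by simp [hj])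
  have count (q : κ → ι × {v // v ≠ i}) : (#(hits i q) : R) * x ^ #(hits i q) =
      ∑ j, ∏ j', (if (q j').1 = i then x else if j' = j then 0 else 1) := by
    simp_rw [hit_at, sum_ite, sum_const_zero, add_zero, sum_const, nsmul_eq_mul, hits]
  have factor (j : κ) : ∏ j', ((Fintype.card ι - 1 : R) *
      (x + (Fintype.card ι - 1) * if j' = j then 0 else 1)) =
      (Fintype.card ι - 1) ^ Fintype.card κ * x * (x + (Fintype.card ι - 1)) ^
        (Fintype.card κ - 1) := by
    obtain ⟨M, hM⟩ := Nat.exists_eq_add_one_of_ne_zero (Fintype.card_pos_iff.2 ⟨j⟩).ne'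
    rw [Fintype.prod_eq_mul_prod_compl j, if_pos rfl,
      prod_congr rfl fun j' hj' => by rw [if_neg (by simpa using hj')], prod_const, card_compl,
      card_singleton, hM]
    simp only [add_tsub_cancel_right, mul_zero, add_zero, mul_one, mul_pow]
    ring
  simp_rw [count]
  rw [sum_comm, sum_congr rfl fun j _ => (Fintype.prod_sum fun j' (u : ι × {v // v ≠ i}) =>
    if u.1 = i then x else if j' = j then 0 else 1).symm]
  simp_rw [sum_ite_fst_eq_const, factor, sum_const, card_univ, nsmul_eq_mul, mul_assoc]

end Resampling

section Coupling

variable {κ ι : Type*} [Fintype κ] [DecidableEq κ] [Fintype ι] [DecidableEq ι] (i : ι)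
  {a b : (κ → ι) → ℝ} {x δ : ℝ}

theorem card_pow_mul_sum_le_of_le_resample
    (h : ∀ q : κ → ι × {v // v ≠ i}, a (fun j => (q j).1) ≤
      x ^ #(hits i q) * b (fun j => resample i (q j)) + #(hits i q) * x ^ #(hits i q) * δ) :
    (Fintype.card ι - 1 : ℝ) ^ Fintype.card κ * ∑ f, a f ≤
      (x + (Fintype.card ι - 1)) ^ Fintype.card κ * ∑ f with ∀ j, f j ≠ i, b f +
        Fintype.card κ * (Fintype.card ι - 1) ^ Fintype.card κ * x *
          (x + (Fintype.card ι - 1)) ^ (Fintype.card κ - 1) * δ := by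
  have hsum := sum_le_sum fun q (_ : q ∈ univ) => h q
  rwa [sum_comp_fst, sum_add_distrib, sum_pow_card_hits_mul_comp_resample, ← sum_mul,
    sum_card_hits_mul_pow, nsmul_eq_mul, Nat.cast_pow, cast_card_subtype_ne] at hsum

theorem pow_mul_sum_le_of_resample_le (hx : 0 < x)
    (h : ∀ q : κ → ι × {v // v ≠ i}, b (fun j => resample i (q j)) ≤
      x ^ #(hits i q) * b (fun j => (q j).1) + #(hits i q) * x ^ #(hits i q) * δ) :
    (x⁻¹ + (Fintype.card ι - 1)) ^ Fintype.card κ * ∑ f with ∀ j, f j ≠ i, b f ≤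
      (Fintype.card ι - 1 : ℝ) ^ Fintype.card κ * ∑ f, b f +
        Fintype.card κ * (Fintype.card ι - 1) ^ Fintype.card κ *
          (Fintype.card ι : ℝ) ^ (Fintype.card κ - 1) * δ := by
  have h' (q : κ → ι × {v // v ≠ i}) : x⁻¹ ^ #(hits i q) * b (fun j => resample i (q j)) ≤
      b (fun j => (q j).1) + #(hits i q) * 1 ^ #(hits i q) * δ := by
    have hk : x⁻¹ ^ #(hits i q) * x ^ #(hits i q) = 1 := by
      rw [← mul_pow, inv_mul_cancel₀ hx.ne', one_pow]
    calc x⁻¹ ^ #(hits i q) * b (fun j => resample i (q j))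
        ≤ x⁻¹ ^ #(hits i q) * (x ^ #(hits i q) * b (fun j => (q j).1) +
            #(hits i q) * x ^ #(hits i q) * δ) :=
          mul_le_mul_of_nonneg_left (h q) (by positivity)
      _ = b (fun j => (q j).1) + #(hits i q) * 1 ^ #(hits i q) * δ := by
          linear_combination (b (fun j => (q j).1) + #(hits i q) * δ) * hk
  have hsum := sum_le_sum fun q (_ : q ∈ univ) => h' q
  rwa [sum_add_distrib, sum_comp_fst, sum_pow_card_hits_mul_comp_resample, ← sum_mul,
    sum_card_hits_mul_pow, nsmul_eq_mul, Nat.cast_pow, cast_card_subtype_ne, mul_one,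
    add_sub_cancel] at hsum

theorem card_pow_mul_sum_le_of_coupling {E : ℝ} (hx : 0 < x) (hb : ∀ f, 0 ≤ b f) (hE : 0 ≤ E)
    (hratio : (x + (Fintype.card ι - 1)) ^ Fintype.card κ ≤
      E * (x⁻¹ + (Fintype.card ι - 1)) ^ Fintype.card κ)
    (hab : ∀ q : κ → ι × {v // v ≠ i}, a (fun j => (q j).1) ≤
      x ^ #(hits i q) * b (fun j => resample i (q j)) + #(hits i q) * x ^ #(hits i q) * δ)
    (hba : ∀ q : κ → ι × {v // v ≠ i}, b (fun j => resample i (q j)) ≤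
      x ^ #(hits i q) * b (fun j => (q j).1) + #(hits i q) * x ^ #(hits i q) * δ) :
    (Fintype.card ι - 1 : ℝ) ^ Fintype.card κ * ∑ f, a f ≤
      (Fintype.card ι - 1 : ℝ) ^ Fintype.card κ * (E * ∑ f, b f + Fintype.card κ *
        (E * Fintype.card ι ^ (Fintype.card κ - 1) +
          x * (x + (Fintype.card ι - 1)) ^ (Fintype.card κ - 1)) * δ) := by
  have hG : 0 ≤ ∑ f with ∀ j, f j ≠ i, b f := sum_nonneg fun f _ => hb f
  linear_combination card_pow_mul_sum_le_of_le_resample i hab +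
    mul_le_mul_of_nonneg_right hratio hG + E * pow_mul_sum_le_of_resample_le i hx hba

end Coupling

theorem exp_le_one_add_add_sq {x : ℝ} (hx : |x| ≤ 1) : Real.exp x ≤ 1 + x + x ^ 2 := by
  linarith [le_abs_self (Real.exp x - 1 - x), Real.abs_exp_sub_one_sub_id_le hx]

section Estimates

variable {ε N : ℝ}

theorem exp_add_sub_one_le_exp_mul (hε0 : 0 ≤ ε) (hε1 : ε ≤ 1) (hN : 2 ≤ N) :
    Real.exp ε + (N - 1) ≤ Real.exp (6 * ε / N) * (Real.exp (-ε) + (N - 1)) := by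
  have hexp := exp_le_one_add_add_sq (abs_le.2 ⟨by linarith, hε1⟩)
  have hneg : 1 - ε ≤ Real.exp (-ε) := by linarith [Real.add_one_le_exp (-ε)]
  have hN0 : 0 < N := by linarith
  have ht : 6 * ε / N * N = 6 * ε := div_mul_cancel₀ _ hN0.ne'
  have ht0 : 0 ≤ 6 * ε / N := div_nonneg (by positivity) hN0.le
  have ht3 : 6 * ε / N ≤ 3 * ε := by
    rw [div_le_iff₀ hN0]
    nlinarith
  calc Real.exp ε + (N - 1)
      ≤ (1 + 6 * ε / N) * (Real.exp (-ε) + (N - 1)) := by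
        nlinarith [mul_le_mul_of_nonneg_left (by linarith : N - ε ≤ Real.exp (-ε) + (N - 1))
          (by linarith : 0 ≤ 1 + 6 * ε / N), mul_le_mul_of_nonneg_right ht3 hε0]
    _ ≤ Real.exp (6 * ε / N) * (Real.exp (-ε) + (N - 1)) := by
        gcongr
        · linarith [Real.exp_pos (-ε)]
        · linarith [Real.add_one_le_exp (6 * ε / N)]

theorem exp_add_sub_one_le_mul_exp (hε0 : 0 ≤ ε) (hε1 : ε ≤ 1) (hN : 2 ≤ N) :
    Real.exp ε + (N - 1) ≤ N * Real.exp (6 * ε / N) := by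
  have hexp := exp_le_one_add_add_sq (abs_le.2 ⟨by linarith, hε1⟩)
  have ht : N * (1 + 6 * ε / N) = N + 6 * ε := by
    field_simp [(by linarith : (0 : ℝ) < N).ne']
  nlinarith [mul_le_mul_of_nonneg_left (Real.add_one_le_exp (6 * ε / N)) (by linarith : 0 ≤ N)]

theorem exp_add_sub_one_pow_le (hε0 : 0 ≤ ε) (hε1 : ε ≤ 1) (hN : 2 ≤ N) (m : ℕ) :
    (Real.exp ε + (N - 1)) ^ m ≤ Real.exp (6 * ε * m / N) * ((Real.exp ε)⁻¹ + (N - 1)) ^ m := by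
  have h := pow_le_pow_left₀ (by linarith [Real.exp_pos ε])
    (exp_add_sub_one_le_exp_mul hε0 hε1 hN) m
  rwa [mul_pow, ← Real.exp_nat_mul, Real.exp_neg, mul_div_assoc', mul_comm (m : ℝ)] at h

theorem exp_mul_exp_add_sub_one_pow_le (hε0 : 0 ≤ ε) (hε1 : ε ≤ 1) (hN : 2 ≤ N) (m : ℕ) :
    Real.exp ε * (Real.exp ε + (N - 1)) ^ (m - 1) ≤
      3 * (N ^ (m - 1) * Real.exp (6 * ε * m / N)) := by
  have hpow := pow_le_pow_left₀ (by linarith [Real.exp_pos ε])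
    (exp_add_sub_one_le_mul_exp hε0 hε1 hN) (m - 1)
  rw [mul_pow, ← Real.exp_nat_mul] at hpow
  have hexp : Real.exp (↑(m - 1) * (6 * ε / N)) ≤ Real.exp (6 * ε * m / N) := by
    rw [mul_div_assoc', mul_comm _ (6 * ε)]
    gcongr
    exact_mod_cast m.sub_le 1
  exact mul_le_mul ((Real.exp_le_exp.2 hε1).trans Real.exp_one_lt_three.le)
    (hpow.trans (mul_le_mul_of_nonneg_left hexp (by positivity)))
    (pow_nonneg (by linarith [Real.exp_pos ε]) _) (by norm_num)

end Estimates

theorem IsDP.sum_toReal_comp_le {Z Ω ι : Type*} [Fintype ι] [DecidableEq ι] {m : ℕ}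
    {A : (Fin m → Z) → PMF Ω} {ε δ : ℝ} (hA : IsDP A ε δ) (hε0 : 0 ≤ ε) (hε1 : ε ≤ 1)
    (hδ : 0 ≤ δ) (hι : 2 ≤ Fintype.card ι) {S₁ S₂ : ι → Z} (i : ι)
    (hS : ∀ j, j ≠ i → S₁ j = S₂ j) (O : Set Ω) :
    ∑ f : Fin m → ι, ((A fun j => S₁ (f j)).toOuterMeasure O).toReal ≤
      Real.exp (6 * ε * m / Fintype.card ι) *
          ∑ f : Fin m → ι, ((A fun j => S₂ (f j)).toOuterMeasure O).toReal +
        4 * m * (Fintype.card ι : ℝ) ^ (m - 1) * Real.exp (6 * ε * m / Fintype.card ι) * δ := by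
  have hN : (2 : ℝ) ≤ Fintype.card ι := by exact_mod_cast hι
  have coupled := card_pow_mul_sum_le_of_coupling i
    (a := fun f => ((A fun j => S₁ (f j)).toOuterMeasure O).toReal)
    (b := fun f => ((A fun j => S₂ (f j)).toOuterMeasure O).toReal) (Real.exp_pos ε)
    (fun f => ENNReal.toReal_nonneg) (Real.exp_pos _).le
    (by simpa using exp_add_sub_one_pow_le hε0 hε1 hN m)
    (fun q => hA.toReal_le_of_eqOn_compl hε0 hδ O (hits i q) fun j hj => by
      simp only [resample_eq_fst_of_notMem_hits i hj]
      exact hS _ (by simpa [hits] using hj))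
    (fun q => hA.toReal_le_of_eqOn_compl hε0 hδ O (hits i q) fun j hj => by
      simp only [resample_eq_fst_of_notMem_hits i hj])
  simp only [Fintype.card_fin] at coupled
  linear_combination le_of_mul_le_mul_left coupled (pow_pos (by linarith) m) +
    (m * δ) * exp_mul_exp_add_sub_one_pow_le hε0 hε1 hN m

/-- Lemma 2.16, privacy amplification by subsampling. -/
theorem privacy_amplification_by_subsampling {X Ω : Type*} (ε δ : ℝ) (m n : ℕ)
    (A : (Fin m → X × Bool) → PMF Ω)
    (hε0 : 0 ≤ ε) (hε : ε ≤ 1) (hδ : 0 ≤ δ)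
    (hn : 2 ≤ n)
    (hA : IsDP A ε δ) :
    IsDP (fun S : Fin n → X × Bool =>
        (@PMF.uniformOfFintype (Fin m → Fin n) _ ⟨fun _ => ⟨0, by omega⟩⟩).bind
          fun f => A fun i => S (f i))
      (6 * ε * (m : ℝ) / (n : ℝ))
      (Real.exp (6 * ε * (m : ℝ) / (n : ℝ)) * (4 * (m : ℝ) / (n : ℝ)) * δ) := by
  rw [isDP_iff_toReal (by positivity)]
  rintro S₁ S₂ ⟨i, -, hS⟩ O
  have key := hA.sum_toReal_comp_le hε0 hε hδ (by simpa using hn) i hS O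
  simp only [PMF.toReal_toOuterMeasure_uniformOfFintype_bind, Fintype.card_fun,
    Fintype.card_fin] at key ⊢
  have hpow : (m : ℝ) * n ^ (m - 1) = m / n * n ^ m := by
    rcases m with _ | m
    · simp
    · rw [pow_succ, Nat.add_sub_cancel]
      field_simp
  rw [Nat.cast_pow, div_le_iff₀ (by positivity), add_mul, mul_assoc,
    div_mul_cancel₀ _ (by positivity)]
  exact key.trans_eq (by linear_combination (4 * Real.exp (6 * ε * m / n) * δ) * hpow)
end

section
/- Let H be a finite set and q a score function of sensitivity Δ on datasets of size n. The exponential mechanism, which on input S outputs h∈H with probability exp(−ε·q(S,h)/(2Δ)) / Σ_{f∈H} exp(−ε·q(S,f)/(2Δ)), is ε-differentially private; moreover, for every dataset S and every β∈(0,1), with probability at least 1−β it outputs an h with q(S,h) ≤ min_{f∈H} q(S,f) + (2Δ/ε)·ln(|H|/β). -/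
open MeasureTheory
open scoped ENNReal

/-!
Privacy: if every score moves by at most `ε / 2` between neighbouring datasets, the weight
`exp (score h)` and the normalising sum each move by a factor at most `exp (ε / 2)`, so every
probability moves by a factor at most `exp ε`. Utility: a hypothesis whose score lies `t` below
that of an optimal `h₀` has probability at most `exp (-t)`, because the normalising sum is at
least `exp (score h₀)`; a union bound over the `|H|` hypotheses with `t = log (|H| / β)` leaves
mass at most `β` outside the good set.
-/

namespace PMF

variable {α : Type*} (p : PMF α)

theorem toOuterMeasure_add_toOuterMeasure_compl (s : Set α) :
    p.toOuterMeasure s + p.toOuterMeasure sᶜ = 1 := by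
  rw [toOuterMeasure_apply, toOuterMeasure_apply, ← ENNReal.tsum_add]
  simp only [Set.indicator_self_add_compl_apply, tsum_coe]

theorem toOuterMeasure_le_mul_of_le {r : PMF α} {a : ℝ≥0∞} (hpr : ∀ x, p x ≤ a * r x)
    (s : Set α) : p.toOuterMeasure s ≤ a * r.toOuterMeasure s := by
  rw [toOuterMeasure_apply, toOuterMeasure_apply, ← ENNReal.tsum_mul_left]
  refine ENNReal.tsum_le_tsum fun x => ?_
  by_cases hx : x ∈ s <;> simp [hx, hpr x]

end PMF

section ExpMech

open Real

variable {H : Type*} [Fintype H] [Nonempty H]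

theorem sum_exp_pos (score : H → ℝ) : 0 < ∑ f, exp (score f) :=
  Finset.sum_pos (fun f _ => exp_pos (score f)) Finset.univ_nonempty

theorem expMech_apply (score : H → ℝ) (h : H) :
    expMech score h = ENNReal.ofReal (exp (score h) / ∑ f, exp (score f)) := by
  rw [ENNReal.ofReal_div_of_pos (sum_exp_pos score),
    ENNReal.ofReal_sum_of_nonneg fun f _ => (exp_pos _).le]
  rfl

theorem expMech_apply_le_exp_sub (score : H → ℝ) (h h₀ : H) :
    expMech score h ≤ ENNReal.ofReal (exp (score h - score h₀)) := by
  rw [expMech_apply, exp_sub]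
  refine ENNReal.ofReal_le_ofReal (div_le_div_of_nonneg_left (exp_pos _).le (exp_pos _) ?_)
  exact Finset.single_le_sum (fun f _ => (exp_pos (score f)).le) (Finset.mem_univ h₀)

theorem expMech_apply_le_exp_mul {s₁ s₂ : H → ℝ} {c : ℝ} (hs : ∀ h, |s₁ h - s₂ h| ≤ c)
    (h : H) : expMech s₁ h ≤ ENNReal.ofReal (exp (2 * c)) * expMech s₂ h := by
  have hle : ∀ f, exp (s₁ f) ≤ exp c * exp (s₂ f) := fun f => by
    rw [← exp_add]; exact exp_le_exp.mpr (by linarith [(abs_le.mp (hs f)).2])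
  have hge : ∀ f, exp (s₂ f) ≤ exp c * exp (s₁ f) := fun f => by
    rw [← exp_add]; exact exp_le_exp.mpr (by linarith [(abs_le.mp (hs f)).1])
  have hZ : ∑ f, exp (s₂ f) ≤ exp c * ∑ f, exp (s₁ f) := by
    rw [Finset.mul_sum]; exact Finset.sum_le_sum fun f _ => hge f
  rw [expMech_apply, expMech_apply, ← ENNReal.ofReal_mul (exp_pos _).le]
  refine ENNReal.ofReal_le_ofReal ?_
  rw [← mul_div_assoc, div_le_div_iff₀ (sum_exp_pos s₁) (sum_exp_pos s₂),
    show exp (2 * c) = exp c * exp c by rw [← exp_add, two_mul]]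
  calc exp (s₁ h) * ∑ f, exp (s₂ f)
      ≤ (exp c * exp (s₂ h)) * (exp c * ∑ f, exp (s₁ f)) :=
        mul_le_mul (hle h) hZ (sum_exp_pos s₂).le (by positivity)
    _ = exp c * exp c * exp (s₂ h) * ∑ f, exp (s₁ f) := by ring

theorem expMech_toOuterMeasure_le_exp_mul {s₁ s₂ : H → ℝ} {c : ℝ}
    (hs : ∀ h, |s₁ h - s₂ h| ≤ c) (O : Set H) :
    (expMech s₁).toOuterMeasure O ≤
      ENNReal.ofReal (exp (2 * c)) * (expMech s₂).toOuterMeasure O :=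
  PMF.toOuterMeasure_le_mul_of_le _ (expMech_apply_le_exp_mul hs) O

theorem expMech_toOuterMeasure_lt_sub_le (score : H → ℝ) (h₀ : H) (t : ℝ) :
    (expMech score).toOuterMeasure {h | score h < score h₀ - t} ≤
      ENNReal.ofReal (Fintype.card H * exp (-t)) := by
  rw [PMF.toOuterMeasure_apply_fintype, ENNReal.ofReal_mul (Nat.cast_nonneg _),
    ENNReal.ofReal_natCast, ← nsmul_eq_mul, ← Finset.card_univ, ← Finset.sum_const]
  refine Finset.sum_le_sum fun h _ => ?_
  by_cases hh : score h < score h₀ - t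
  · rw [Set.indicator_of_mem (show h ∈ {h | score h < score h₀ - t} from hh)]
    exact (expMech_apply_le_exp_sub score h h₀).trans
      (ENNReal.ofReal_le_ofReal (exp_le_exp.mpr (by linarith)))
  · simp [hh]

theorem one_sub_card_mul_exp_neg_le_expMech_toOuterMeasure (score : H → ℝ) (h₀ : H) (t : ℝ) :
    ENNReal.ofReal (1 - Fintype.card H * exp (-t)) ≤
      (expMech score).toOuterMeasure {h | score h₀ - t ≤ score h} := by
  have hcompl : {h | score h₀ - t ≤ score h} = {h | score h < score h₀ - t}ᶜ := by
    ext h; simp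
  rw [ENNReal.ofReal_sub _ (by positivity), ENNReal.ofReal_one, hcompl,
    ← (expMech score).toOuterMeasure_add_toOuterMeasure_compl {h | score h < score h₀ - t}]
  exact tsub_le_iff_left.mpr (add_le_add_left (expMech_toOuterMeasure_lt_sub_le _ _ _) _)

end ExpMech

/-- Lemma 2.12, properties of the exponential mechanism. -/
theorem exponential_mechanism_properties {X H : Type*} [Fintype H] [Nonempty H] (n : ℕ)
    (q : (Fin n → X × Bool) → H → ℝ) (Δ ε : ℝ) (hΔ : 0 < Δ) (hε : 0 < ε)
    (hsens : ∀ S₁ S₂ : Fin n → X × Bool, Neighboring S₁ S₂ → ∀ h, |q S₁ h - q S₂ h| ≤ Δ) :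
    IsDP (fun S => expMech fun h => -(ε * q S h) / (2 * Δ)) ε 0 ∧
    ∀ (S : Fin n → X × Bool) (β : ℝ), 0 < β → β < 1 →
      ENNReal.ofReal (1 - β) ≤
        (expMech fun h => -(ε * q S h) / (2 * Δ)).toOuterMeasure
          {h | q S h ≤ (⨅ f, q S f) + (2 * Δ / ε) * Real.log ((Fintype.card H : ℝ) / β)} := by
  refine ⟨fun S₁ S₂ hN O => ?_, fun S β hβ _ => ?_⟩
  · have hscore : ∀ h, |-(ε * q S₁ h) / (2 * Δ) - -(ε * q S₂ h) / (2 * Δ)| ≤ ε / 2 :=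
      fun h => by
        rw [← sub_div, abs_div, abs_of_pos (by positivity : 0 < 2 * Δ),
          div_le_iff₀ (by positivity), neg_sub_neg, ← mul_sub, abs_mul, abs_of_pos hε,
          abs_sub_comm]
        nlinarith [hsens S₁ S₂ hN h]
    simpa only [mul_div_cancel₀ ε two_ne_zero, ENNReal.ofReal_zero, add_zero] using
      expMech_toOuterMeasure_le_exp_mul hscore O
  · obtain ⟨f₀, hf₀⟩ := exists_eq_ciInf_of_finite (f := q S)
    have hβ_eq : (Fintype.card H : ℝ) * Real.exp (-Real.log (Fintype.card H / β)) = β := by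
      rw [Real.exp_neg, Real.exp_log (by positivity)]; field_simp
    refine (hβ_eq ▸ one_sub_card_mul_exp_neg_le_expMech_toOuterMeasure _ f₀ _).trans
      (measure_mono fun h hh => ?_)
    simp only [Set.mem_ofPred_eq, ← hf₀] at hh ⊢
    have hscale : ∀ x, 2 * Δ / ε * (-(ε * x) / (2 * Δ)) = -x := fun x => by field_simp
    have hscaled := mul_le_mul_of_nonneg_left hh (by positivity : 0 ≤ 2 * Δ / ε)
    rw [mul_sub, hscale, hscale] at hscaled
    linarith
end

section
/- Let T̂ be a labeled dataset of size t−1, let T₁ = T̂ ∪ {(x₁,y₁)} and T₂ = T̂ ∪ {(x₁',y₁')} be labeled datasets of size t, and let W₁, W₂ be neighboring labeled datasets of the same size w. If h₁, h₂ : X → {0,1} agree on every unlabeled point of T̂, then the scores q(T∘W, h) = inf_{f∈C} ( dis_{T_X}(h,f) + err_W(f) ) satisfy q(T₂∘W₂, h₂) ≤ q(T₁∘W₁, h₁) + 1/t + 1/w, and by symmetry |q(T₁∘W₁, h₁) − q(T₂∘W₂, h₂)| ≤ 1/t + 1/w. -/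
open MeasureTheory
open scoped ENNReal

/-
For each fixed concept `f`, the summand `dis_T(h, f) + err_W(f)` grows by at most `1/t + 1/w`
from the first side to the second: `h₁` and `h₂` agree on the shared points of `T₁` and `T₂`,
so the disagreement count can change only at the one differing point of `T`, and the error count
only at the one differing entry of `W`. The bound passes to the infimum over `C`.
-/

theorem Neighboring.symm {Z : Type*} {n : ℕ} {S₁ S₂ : Fin n → Z} (h : Neighboring S₁ S₂) :
    Neighboring S₂ S₁ :=
  let ⟨i, hne, heq⟩ := h
  ⟨i, hne.symm, fun j hj => (heq j hj).symm⟩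

theorem ciInf_le_ciInf_add_of_le_add {ι α : Type*} [ConditionallyCompleteLattice α] [AddGroup α]
    [AddRightMono α] [Nonempty ι] {f g : ι → α} {c : α}
    (hf : BddBelow (Set.range f)) (h : ∀ i, f i ≤ g i + c) : ⨅ i, f i ≤ (⨅ i, g i) + c :=
  sub_le_iff_le_add.mp <| le_ciInf fun i =>
    sub_le_iff_le_add.mpr <| (ciInf_le hf i).trans (h i)

theorem Finset.card_filter_le_card_filter_add_one {ι : Type*} (s : Finset ι) {p q : ι → Prop}
    [DecidablePred p] [DecidablePred q] (i : ι) (h : ∀ j, j ≠ i → p j → q j) :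
    (s.filter p).card ≤ (s.filter q).card + 1 := by
  classical
  calc (s.filter p).card ≤ (insert i (s.filter q)).card := by
        refine Finset.card_le_card fun j hj => ?_
        rcases eq_or_ne j i with rfl | hji
        · exact Finset.mem_insert_self _ _
        · simp only [Finset.mem_filter] at hj
          exact Finset.mem_insert_of_mem (Finset.mem_filter.mpr ⟨hj.1, h j hji hj.2⟩)
    _ ≤ (s.filter q).card + 1 := Finset.card_insert_le _ _

theorem card_filter_div_le_card_filter_div_add {n : ℕ} {p q : Fin n → Prop}
    [DecidablePred p] [DecidablePred q] (i : Fin n) (h : ∀ j, j ≠ i → p j → q j) :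
    ((Finset.univ.filter p).card : ℝ) / n ≤ (Finset.univ.filter q).card / n + 1 / n := by
  rw [← add_div]
  gcongr
  exact_mod_cast Finset.univ.card_filter_le_card_filter_add_one i h

theorem errS_le_errS_add {X : Type*} {n : ℕ} {S₁ S₂ : Fin n → X × Bool}
    (hS : Neighboring S₁ S₂) (f : X → Bool) : errS S₂ f ≤ errS S₁ f + 1 / n := by
  obtain ⟨i, -, heq⟩ := hS
  exact card_filter_div_le_card_filter_div_add i fun j hj => by rw [heq j hj]; exact id

theorem disS_le_disS_add {X : Type*} {n : ℕ} {Sx₁ Sx₂ : Fin n → X} {h₁ h₂ : X → Bool}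
    (i : Fin n) (hSx : ∀ j, j ≠ i → Sx₁ j = Sx₂ j)
    (hh : ∀ j, j ≠ i → h₁ (Sx₁ j) = h₂ (Sx₂ j)) (f : X → Bool) :
    disS Sx₂ h₂ f ≤ disS Sx₁ h₁ f + 1 / n :=
  card_filter_div_le_card_filter_div_add i fun j hj => by
    rw [← hh j hj, ← hSx j hj]; exact id

theorem bddBelow_qScore_summands {X : Type*} (C : Set (X → Bool)) {t w : ℕ}
    (T : Fin t → X × Bool) (W : Fin w → X × Bool) (h : X → Bool) :
    BddBelow (Set.range fun f : C =>
      disS (fun i => (T i).1) h (f : X → Bool) + errS W (f : X → Bool)) :=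
  ⟨0, by rintro _ ⟨f, rfl⟩; unfold disS errS; positivity⟩

theorem qScore_le_qScore_add {X : Type*} {C : Set (X → Bool)} (hC : C.Nonempty)
    {t w : ℕ} {T₁ T₂ : Fin t → X × Bool} (i : Fin t) (hT : ∀ j, j ≠ i → T₁ j = T₂ j)
    {W₁ W₂ : Fin w → X × Bool} (hW : Neighboring W₁ W₂)
    {h₁ h₂ : X → Bool} (hagree : ∀ j, j ≠ i → h₁ (T₁ j).1 = h₂ (T₂ j).1) :
    qScore C T₂ W₂ h₂ ≤ qScore C T₁ W₁ h₁ + 1 / (t : ℝ) + 1 / (w : ℝ) := by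
  have : Nonempty C := hC.to_subtype
  rw [add_assoc]
  refine ciInf_le_ciInf_add_of_le_add (bddBelow_qScore_summands C T₂ W₂ h₂) fun f => ?_
  have hdis := disS_le_disS_add i (fun j hj => congrArg Prod.fst (hT j hj)) hagree f
  have herr := errS_le_errS_add hW f
  linarith

/-- score comparison across datasets sharing `T̂` for hypotheses that
agree on `T̂`. -/
theorem score_sensitivity_in_T {X : Type*} (C : Set (X → Bool)) (hC : C.Nonempty)
    {t w : ℕ} (T₁ T₂ : Fin t → X × Bool) (i : Fin t)
    (hT : ∀ j, j ≠ i → T₁ j = T₂ j)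
    (W₁ W₂ : Fin w → X × Bool) (hW : Neighboring W₁ W₂)
    (h₁ h₂ : X → Bool) (hagree : ∀ j, j ≠ i → h₁ (T₁ j).1 = h₂ (T₂ j).1) :
    qScore C T₂ W₂ h₂ ≤ qScore C T₁ W₁ h₁ + 1 / (t : ℝ) + 1 / (w : ℝ) ∧
    |qScore C T₁ W₁ h₁ - qScore C T₂ W₂ h₂| ≤ 1 / (t : ℝ) + 1 / (w : ℝ) := by
  have h₁₂ := qScore_le_qScore_add hC i hT hW hagree
  have h₂₁ := qScore_le_qScore_add hC i (fun j hj => (hT j hj).symm) hW.symm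
    fun j hj => (hagree j hj).symm
  exact ⟨h₁₂, abs_sub_le_iff.mpr ⟨by linarith, by linarith⟩⟩
end

section
/- Let D be a distribution over X×{0,1} with marginal D_X, let T, W be datasets, let η = inf_{c∈C} err_D(c), and let H ⊆ C be a set containing, for every labeling of T_X realized by C, at least one concept consistent with that labeling. Suppose the following three conditions hold: (E₁) for every c∈C, |err_D(c) − err_W(c)| ≤ α/9; (E₂) h∈H satisfies q(T∘W,h) ≤ min_{f∈H} q(T∘W,f) + α/9, where q(T∘W,g) = min_{f∈C}( dis_{T_X}(g,f) + err_W(f) ), and this minimum over f∈C is attained; (E₃) for all h₁,h₂∈C with dis_{T_X}(h₁,h₂) ≤ α/3 it holds that dis_{D_X}(h₁,h₂) ≤ 2α/3. Then err_D(h) ≤ η + α. -/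
open MeasureTheory
open scoped ENNReal

/-!
Let `f ∈ C` attain the score of `h`, so `q(h) = dis_{T_X}(h,f) + err_W(f)`. Since `H` covers every
labeling of `T_X` realized by `C`, each `c ∈ C` has a representative in `H` with score at most
`err_W(c) ≤ err_D(c) + α/9`; hence `q(h) ≤ η + 2α/9` by `E₂`. As `err_W(f) ≥ err_D(f) - α/9 ≥ η - α/9`,
this forces `dis_{T_X}(h,f) ≤ α/3`, so `dis_{D_X}(h,f) ≤ 2α/3` by `E₃`, and the triangle inequality
`err_D(h) ≤ dis_{D_X}(h,f) + err_D(f)` gives the bound.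
-/

section Empirical

variable {X : Type*} {t w : ℕ}

lemma errS_nonneg (W : Fin w → X × Bool) (g : X → Bool) : 0 ≤ errS W g := by
  unfold errS; positivity

lemma disS_nonneg (Sx : Fin t → X) (g₁ g₂ : X → Bool) : 0 ≤ disS Sx g₁ g₂ := by
  unfold disS; positivity

lemma disS_eq_zero_of_agree {Sx : Fin t → X} {g₁ g₂ : X → Bool}
    (hagree : ∀ i, g₁ (Sx i) = g₂ (Sx i)) : disS Sx g₁ g₂ = 0 := by
  simp [disS, hagree]

lemma qScore_nonneg (C : Set (X → Bool)) (T : Fin t → X × Bool) (W : Fin w → X × Bool)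
    (g : X → Bool) : 0 ≤ qScore C T W g :=
  Real.iInf_nonneg fun _ => add_nonneg (disS_nonneg _ _ _) (errS_nonneg _ _)

lemma qScore_le {C : Set (X → Bool)} (T : Fin t → X × Bool) (W : Fin w → X × Bool)
    (g : X → Bool) {f : X → Bool} (hf : f ∈ C) :
    qScore C T W g ≤ disS (fun i => (T i).1) g f + errS W f :=
  ciInf_le ⟨0, by rintro _ ⟨_, rfl⟩; exact add_nonneg (disS_nonneg _ _ _) (errS_nonneg _ _)⟩
    (⟨f, hf⟩ : C)

end Empirical

section Population

variable {X : Type*} [MeasurableSpace X] (D : Measure (X × Bool))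

lemma optErr_le {C : Set (X → Bool)} {c : X → Bool} (hc : c ∈ C) : optErr C D ≤ errD D c :=
  ciInf_le ⟨0, by rintro _ ⟨_, rfl⟩; exact ENNReal.toReal_nonneg⟩ (⟨c, hc⟩ : C)

lemma errD_le_disD_add_errD [IsFiniteMeasure D] (g f : X → Bool) :
    errD D g ≤ disD (D.map Prod.fst) g f + errD D f := by
  have hsub : {p : X × Bool | g p.1 ≠ p.2} ⊆
      Prod.fst ⁻¹' {x | g x ≠ f x} ∪ {p : X × Bool | f p.1 ≠ p.2} := by
    intro p hp
    by_cases hgf : g p.1 = f p.1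
    · exact Or.inr (show f p.1 ≠ p.2 from hgf ▸ hp)
    · exact Or.inl hgf
  have hmeas : D {p : X × Bool | g p.1 ≠ p.2} ≤
      D.map Prod.fst {x | g x ≠ f x} + D {p : X × Bool | f p.1 ≠ p.2} :=
    calc D {p : X × Bool | g p.1 ≠ p.2}
        ≤ D (Prod.fst ⁻¹' {x | g x ≠ f x}) + D {p : X × Bool | f p.1 ≠ p.2} :=
          (measure_mono hsub).trans (measure_union_le _ _)
      _ ≤ _ := by gcongr; exact Measure.le_map_apply measurable_fst.aemeasurable _
  unfold errD disD
  rw [← ENNReal.toReal_add (measure_ne_top _ _) (measure_ne_top _ _)]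
  exact ENNReal.toReal_mono (ENNReal.add_ne_top.mpr ⟨measure_ne_top _ _, measure_ne_top _ _⟩) hmeas

lemma iInf_qScore_le_optErr_add {C H : Set (X → Bool)} (hC : C.Nonempty) {t w : ℕ}
    {T : Fin t → X × Bool} {W : Fin w → X × Bool} {ε : ℝ}
    (hcover : ∀ c ∈ C, ∃ h' ∈ H, ∀ i, h' (T i).1 = c (T i).1)
    (hdev : ∀ c ∈ C, errS W c ≤ errD D c + ε) :
    ⨅ f : H, qScore C T W (f : X → Bool) ≤ optErr C D + ε := by
  have : Nonempty C := hC.to_subtype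
  suffices h : ∀ c : C, (⨅ f : H, qScore C T W (f : X → Bool)) - ε ≤ errD D c from
    sub_le_iff_le_add.mp (le_ciInf h)
  rintro ⟨c, hc⟩
  obtain ⟨h', hh', hagree⟩ := hcover c hc
  have hrep : qScore C T W h' ≤ errS W c := by
    simpa [disS_eq_zero_of_agree hagree] using qScore_le T W h' hc
  have hinf : (⨅ f : H, qScore C T W (f : X → Bool)) ≤ qScore C T W h' :=
    ciInf_le ⟨0, by rintro _ ⟨_, rfl⟩; exact qScore_nonneg _ _ _ _⟩ (⟨h', hh'⟩ : H)
  linarith [hdev c hc]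

end Population

theorem relabeling_error_bound_general {X : Type*} [MeasurableSpace X]
    (C : Set (X → Bool))
    (D : Measure (X × Bool)) [IsProbabilityMeasure D] {t w : ℕ}
    (T : Fin t → X × Bool) (W : Fin w → X × Bool) (α : ℝ)
    (H : Set (X → Bool)) (hHC : H ⊆ C)
    (hcover : ∀ c ∈ C, ∃ h' ∈ H, ∀ i, h' (T i).1 = c (T i).1)
    (h : X → Bool) (hh : h ∈ H)
    (hE1 : ∀ c ∈ C, |errD D c - errS W c| ≤ α / 9)
    (hE2 : qScore C T W h ≤ (⨅ f : H, qScore C T W (f : X → Bool)) + α / 9)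
    (hattain : ∃ f ∈ C, qScore C T W h = disS (fun i => (T i).1) h f + errS W f)
    (hE3 : ∀ h₁ ∈ C, ∀ h₂ ∈ C, disS (fun i => (T i).1) h₁ h₂ ≤ α / 3 →
      disD (D.map Prod.fst) h₁ h₂ ≤ 2 * α / 3) :
    errD D h ≤ optErr C D + α := by
  obtain ⟨f, hfC, hq⟩ := hattain
  have hinfH := iInf_qScore_le_optErr_add D ⟨f, hfC⟩ hcover (W := W) (ε := α / 9)
    (fun c hc => by linarith [(abs_le.mp (hE1 c hc)).1])
  have hf_dev := (abs_le.mp (hE1 f hfC)).2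
  have hf_opt := optErr_le D hfC
  have hdisS : disS (fun i => (T i).1) h f ≤ α / 3 := by linarith
  have hdisD := hE3 h (hHC hh) f hfC hdisS
  linarith [errD_le_disD_add_errD D h f, disS_nonneg (fun i => (T i).1) h f]

/-- deterministic core of Claim 3.5: under events `E₁`, `E₂`, `E₃`,
the selected hypothesis has near-optimal generalization error. -/
theorem relabeling_error_bound {X : Type*} [MeasurableSpace X]
    (C : Set (X → Bool)) (hC : C.Nonempty)
    (D : Measure (X × Bool)) [IsProbabilityMeasure D] {t w : ℕ}
    (T : Fin t → X × Bool) (W : Fin w → X × Bool) (α : ℝ) (hα : 0 < α)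
    (H : Set (X → Bool)) (hHC : H ⊆ C)
    (hcover : ∀ c ∈ C, ∃ h' ∈ H, ∀ i, h' (T i).1 = c (T i).1)
    (h : X → Bool) (hh : h ∈ H)
    (hE1 : ∀ c ∈ C, |errD D c - errS W c| ≤ α / 9)
    (hE2 : qScore C T W h ≤ (⨅ f : H, qScore C T W (f : X → Bool)) + α / 9)
    (hattain : ∃ f ∈ C, qScore C T W h = disS (fun i => (T i).1) h f + errS W f)
    (hE3 : ∀ h₁ ∈ C, ∀ h₂ ∈ C, disS (fun i => (T i).1) h₁ h₂ ≤ α / 3 →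
      disD (D.map Prod.fst) h₁ h₂ ≤ 2 * α / 3) :
    errD D h ≤ optErr C D + α :=
  relabeling_error_bound_general C D T W α H hHC hcover h hh hE1 hE2 hattain hE3
end
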